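/- arXiv:2108.04995 — 2 statements merged into one kernel-verified Lean document; each statement's English description precedes it below -/
import Mathlib

section
/- Let C be a code on n neurons and let (σ1, σ2, σ3, τ) be a sprocket of C. Then: (a) for every realization U of C in ℝ^d in which U_τ and U_{σj} ∩ U_τ (j = 1, 2, 3) are convex, there exists a line segment with one endpoint in U_{σ1} ∩ U_τ and the other endpoint in U_{σ3} ∩ U_τ that meets U_{σ2} ∩ U_τ (so every sprocket is a wheel of every realization of C); (b) consequently C is non-convex: for no dimension d does C admit a realization in ℝ^d by convex open sets. -/
namespace NeuralCode

/-- `USet U σ` is `U_σ = ⋂ i ∈ σ, U i` (the whole space when `σ = ∅`). -/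
def USet {ι : Type*} {d : ℕ} (U : ι → Set (EuclideanSpace ℝ (Fin d))) (σ : Finset ι) :
    Set (EuclideanSpace ℝ (Fin d)) :=
  ⋂ i ∈ σ, U i

/-- The atom of the codeword `c` in the family `U`. -/
def codeAtom {ι : Type*} {d : ℕ} (U : ι → Set (EuclideanSpace ℝ (Fin d))) (c : Finset ι) :
    Set (EuclideanSpace ℝ (Fin d)) :=
  USet U c \ ⋃ j ∉ c, U j

/-- The family `U` (of open sets) is a realization of the code `C`. -/
def IsRealization {ι : Type*} {d : ℕ} (C : Set (Finset ι))
    (U : ι → Set (EuclideanSpace ℝ (Fin d))) : Prop :=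
  (∀ i, IsOpen (U i)) ∧ ∀ c : Finset ι, c ∈ C ↔ (codeAtom U c).Nonempty

/-- The code `C` is convex: for some dimension `d` it admits a realization in `ℝ^d`
by convex open sets. -/
def IsConvexCode {ι : Type*} (C : Set (Finset ι)) : Prop :=
  ∃ (d : ℕ) (U : ι → Set (EuclideanSpace ℝ (Fin d))),
    IsRealization C U ∧ ∀ i, Convex ℝ (U i)

/-- The trunk of `σ` in `C`: the set of codewords containing `σ`. -/
def trunk {ι : Type*} (C : Set (Finset ι)) (σ : Finset ι) : Set (Finset ι) :=
  {c | c ∈ C ∧ σ ⊆ c}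

/-- The neural complex `Δ(C)` of `C`. -/
def neuralComplex {ι : Type*} (C : Set (Finset ι)) : Set (Finset ι) :=
  {σ | ∃ c ∈ C, σ ⊆ c}

/-- Condition W(i). -/
def WheelWi {ι : Type*} {d : ℕ} (U : ι → Set (EuclideanSpace ℝ (Fin d)))
    (σ1 σ2 σ3 : Finset ι) : Prop :=
  USet U σ1 ∩ USet U σ2 = USet U σ1 ∩ USet U σ2 ∩ USet U σ3 ∧
    USet U σ1 ∩ USet U σ3 = USet U σ1 ∩ USet U σ2 ∩ USet U σ3 ∧
    USet U σ2 ∩ USet U σ3 = USet U σ1 ∩ USet U σ2 ∩ USet U σ3 ∧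
    (USet U σ1 ∩ USet U σ2 ∩ USet U σ3).Nonempty

/-- Condition W(ii). -/
def WheelWii {ι : Type*} {d : ℕ} (U : ι → Set (EuclideanSpace ℝ (Fin d)))
    (σ1 σ2 σ3 τ : Finset ι) : Prop :=
  USet U σ1 ∩ USet U σ2 ∩ USet U σ3 ∩ USet U τ = ∅

/-- Condition W(iii). -/
def WheelWiii {ι : Type*} {d : ℕ} (U : ι → Set (EuclideanSpace ℝ (Fin d)))
    (σ1 σ2 σ3 τ : Finset ι) : Prop :=
  (Convex ℝ (USet U τ) ∧ Convex ℝ (USet U σ1 ∩ USet U τ) ∧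
      Convex ℝ (USet U σ2 ∩ USet U τ) ∧ Convex ℝ (USet U σ3 ∩ USet U τ)) →
    ∃ x ∈ USet U σ1 ∩ USet U τ, ∃ y ∈ USet U σ3 ∩ USet U τ,
      (segment ℝ x y ∩ (USet U σ2 ∩ USet U τ)).Nonempty

/-- Condition W(iii)◦. -/
def WheelWiiiCirc {ι : Type*} {d : ℕ} (U : ι → Set (EuclideanSpace ℝ (Fin d)))
    (σ1 σ2 σ3 τ : Finset ι) : Prop :=
  (USet U σ1 ∩ USet U τ).Nonempty ∧ (USet U σ2 ∩ USet U τ).Nonempty ∧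
    (USet U σ3 ∩ USet U τ).Nonempty

/-- `(σ1, σ2, σ3, τ)` is a wheel of the realization `U`. -/
def IsWheelOfRealization {ι : Type*} {d : ℕ} (U : ι → Set (EuclideanSpace ℝ (Fin d)))
    (σ1 σ2 σ3 τ : Finset ι) : Prop :=
  WheelWi U σ1 σ2 σ3 ∧ WheelWii U σ1 σ2 σ3 τ ∧ WheelWiii U σ1 σ2 σ3 τ

/-- Condition P(i). -/
def CondPi {ι : Type*} [DecidableEq ι] (C : Set (Finset ι)) (σ1 σ2 σ3 : Finset ι) : Prop :=
  σ1 ∪ σ2 ∪ σ3 ∈ neuralComplex C ∧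
    trunk C (σ1 ∪ σ2) = trunk C (σ1 ∪ σ2 ∪ σ3) ∧
    trunk C (σ1 ∪ σ3) = trunk C (σ1 ∪ σ2 ∪ σ3) ∧
    trunk C (σ2 ∪ σ3) = trunk C (σ1 ∪ σ2 ∪ σ3)

/-- Condition P(ii). -/
def CondPii {ι : Type*} [DecidableEq ι] (C : Set (Finset ι)) (σ1 σ2 σ3 τ : Finset ι) : Prop :=
  σ1 ∪ σ2 ∪ σ3 ∪ τ ∉ neuralComplex C

/-- Condition P(iii)◦. -/
def CondPiiiCirc {ι : Type*} [DecidableEq ι] (C : Set (Finset ι)) (σ1 σ2 σ3 τ : Finset ι) :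
    Prop :=
  σ1 ∪ τ ∈ neuralComplex C ∧ σ2 ∪ τ ∈ neuralComplex C ∧ σ3 ∪ τ ∈ neuralComplex C

/-- `(σ1, σ2, σ3, τ)` is a sprocket of `C`. -/
def IsSprocket {ι : Type*} [DecidableEq ι] (C : Set (Finset ι)) (σ1 σ2 σ3 τ : Finset ι) :
    Prop :=
  σ1 ∈ neuralComplex C ∧ σ2 ∈ neuralComplex C ∧ σ3 ∈ neuralComplex C ∧
    τ ∈ neuralComplex C ∧
    CondPi C σ1 σ2 σ3 ∧ CondPii C σ1 σ2 σ3 τ ∧ CondPiiiCirc C σ1 σ2 σ3 τ ∧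
    ∃ ρ1 ∈ neuralComplex C, ∃ ρ3 ∈ neuralComplex C,
      trunk C (σ1 ∪ τ) ⊆ trunk C ρ1 ∧ trunk C (σ3 ∪ τ) ⊆ trunk C ρ3 ∧
      trunk C τ ⊆ trunk C ρ1 ∪ trunk C ρ3 ∧
      trunk C (ρ1 ∪ ρ3 ∪ τ) ⊆ trunk C σ2

/-- `F` is a facet of `Δ(C)`: an inclusion-maximal codeword of `C`. -/
def IsFacet {ι : Type*} (C : Set (Finset ι)) (F : Finset ι) : Prop :=
  F ∈ C ∧ ∀ c ∈ C, F ⊆ c → c = F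

/-- `τ` is a max-intersection face of `Δ(C)`: a face equal to the intersection of two or
more distinct facets. -/
def IsMaxIntersectionFace {ι : Type*} [DecidableEq ι] [Fintype ι] (C : Set (Finset ι))
    (τ : Finset ι) : Prop :=
  τ ∈ neuralComplex C ∧
    ∃ S : Finset (Finset ι), 2 ≤ S.card ∧ (∀ F ∈ S, IsFacet C F) ∧ τ = S.inf id

/-- The link graph of `τ` in `Δ(C)`. -/
def linkGraph {ι : Type*} [DecidableEq ι] (C : Set (Finset ι)) (τ : Finset ι) :
    SimpleGraph {i : ι // i ∉ τ ∧ insert i τ ∈ neuralComplex C} where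
  Adj a b := a ≠ b ∧ τ ∪ {(a : ι), (b : ι)} ∈ neuralComplex C
  symm := ⟨fun a b h => ⟨h.1.symm, by rw [Finset.pair_comm]; exact h.2⟩⟩
  loopless := ⟨fun a h => h.1 rfl⟩

/-- `(σ1, σ2, σ3, τ)` is a wire wheel of `C`. -/
def IsWireWheel {ι : Type*} [DecidableEq ι] (C : Set (Finset ι)) (σ1 σ2 σ3 τ : Finset ι) :
    Prop :=
  σ1 ∈ neuralComplex C ∧ σ2 ∈ neuralComplex C ∧ σ3 ∈ neuralComplex C ∧
    τ ∈ neuralComplex C ∧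
    CondPi C σ1 σ2 σ3 ∧ CondPii C σ1 σ2 σ3 τ ∧ τ ∉ C ∧
    (∀ ω : Finset ι, ω.card = 3 → Disjoint ω τ → τ ∪ ω ∉ neuralComplex C) ∧
    (linkGraph C τ).IsTree ∧
    ∃ v1 v2 v3 : {i : ι // i ∉ τ ∧ insert i τ ∈ neuralComplex C},
      σ1 \ τ = {(v1 : ι)} ∧ σ2 \ τ = {(v2 : ι)} ∧ σ3 \ τ = {(v3 : ι)} ∧
      ∀ p : (linkGraph C τ).Walk v1 v3, p.IsPath → v2 ∈ p.support

/-- `(σ1, σ3, τ)` is a wheel frame of `C`. -/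
def IsWheelFrame {ι : Type*} [DecidableEq ι] (C : Set (Finset ι)) (σ1 σ3 τ : Finset ι) :
    Prop :=
  σ1 ∈ neuralComplex C ∧ σ3 ∈ neuralComplex C ∧ τ ∈ neuralComplex C ∧
    (σ1 ∪ σ3 ∈ neuralComplex C ∧
      ∀ ω : Finset ι, ω ⊆ σ1 ∪ σ3 → ¬ω ⊆ σ1 → ¬ω ⊆ σ3 → ω ∪ τ ∈ neuralComplex C →
        trunk C (σ1 ∪ ω) = trunk C (σ1 ∪ σ3) ∧ trunk C (σ3 ∪ ω) = trunk C (σ1 ∪ σ3)) ∧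
    τ ∪ σ1 ∪ σ3 ∉ neuralComplex C ∧
    σ1 ∪ τ ∈ neuralComplex C ∧ σ3 ∪ τ ∈ neuralComplex C ∧
    σ1 ∩ σ3 = ∅ ∧
    trunk C τ ⊆ ⋃ i ∈ (σ1 ∪ σ3 : Finset ι), trunk C {i}

/-- A subset of `ℝ^d` is top-dimensional: every nonempty intersection with an open set
has nonempty interior. -/
def TopDimensional {d : ℕ} (S : Set (EuclideanSpace ℝ (Fin d))) : Prop :=
  ∀ O : Set (EuclideanSpace ℝ (Fin d)), IsOpen O → (S ∩ O).Nonempty →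
    (interior (S ∩ O)).Nonempty

/-- A realization is top-dimensional if each of its atoms is empty or top-dimensional. -/
def IsTopDimRealization {ι : Type*} {d : ℕ} (U : ι → Set (EuclideanSpace ℝ (Fin d))) :
    Prop :=
  ∀ c : Finset ι, codeAtom U c = ∅ ∨ TopDimensional (codeAtom U c)

/-- `C` is top-dimensionally convex. -/
def IsTopDimConvexCode {ι : Type*} (C : Set (Finset ι)) : Prop :=
  ∃ (d : ℕ) (U : ι → Set (EuclideanSpace ℝ (Fin d))),
    IsRealization C U ∧ IsTopDimRealization U ∧ ∀ i, Convex ℝ (U i)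

/-- The restriction `C|_χ = {c ∩ χ : c ∈ C}`, as a code on the neuron set `χ`. -/
def restrictCode {ι : Type*} [DecidableEq ι] (C : Set (Finset ι)) (χ : Finset ι) :
    Set (Finset {i : ι // i ∈ χ}) :=
  (fun c => c.subtype (· ∈ χ)) '' C

/-- Neuron `j` is trivial in `C`: no codeword contains it. -/
def TrivialNeuron {ι : Type*} (C : Set (Finset ι)) (j : ι) : Prop :=
  ∀ c ∈ C, j ∉ c

/-- Neuron `j` is redundant in `C`. -/
def RedundantNeuron {ι : Type*} [DecidableEq ι] (C : Set (Finset ι)) (j : ι) : Prop :=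
  ¬TrivialNeuron C j ∧ ∃ σ : Finset ι, j ∉ σ ∧ trunk C {j} = trunk C σ

/-- `C` is decomposable with embedded part supported on `φ`. -/
def IsDecomposable {ι : Type*} [DecidableEq ι] [Fintype ι] (C : Set (Finset ι))
    (φ : Finset ι) : Prop :=
  φ ≠ ∅ ∧ φ ≠ Finset.univ ∧
    ∃ ψ : Finset ι, Disjoint φ ψ ∧ ψ ≠ Finset.univ ∧ ψ ∈ C ∧
      ∀ c ∈ C, (c ∩ φ).Nonempty → ∃ φ' ⊆ φ, c = φ' ∪ ψ

end NeuralCode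

/-!
For (a), the segment from a point `x ∈ U_{σ1 ∪ τ}` to a point `y ∈ U_{σ3 ∪ τ}` lies in the convex
set `U_τ`, which the trunk conditions cover by the open sets `U_{ρ1}` and `U_{ρ3}`; as `x ∈ U_{ρ1}`
and `y ∈ U_{ρ3}`, connectedness of the segment gives a point of `U_{ρ1 ∪ ρ3 ∪ τ} ⊆ U_{σ2}` on it.

For (b), take a convex realization, the segment `[x, y]` and its point `z ∈ U_{σ2} ∩ U_τ`
from (a), and a point `p` of `U_{σ1} ∩ U_{σ2} ∩ U_{σ3}` (nonempty by P(i)) as origin. Let `f`, `g`,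
`h` be the gauges of `U_{σ1}`, `U_{σ2}`, `U_{σ3}` along `[x, y]`. Since all pairwise
intersections equal the triple one, the largest of the three gauges is always attained twice;
since by P(ii) the three sets are pairwise disjoint on `U_τ`, at most one gauge is `≤ 1` on
`[x, y]`. With `f < 1` at `x`, `g < 1` at `z` and `h < 1` at `y`, the crossing points `f = g`
before `z` and `g = h` after `z` are incompatible with the convexity of `f` and `h`.
-/

open Set Filter Topology

section Gauge

variable {E : Type*} [NormedAddCommGroup E] [NormedSpace ℝ E] {s s₁ s₂ s₃ t : Set E}

theorem convexOn_gauge (hs : Convex ℝ s) (habs : Absorbent ℝ s) : ConvexOn ℝ univ (gauge s) :=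
  ⟨convex_univ, fun v _ w _ a b ha hb _ => (gauge_add_le hs habs _ _).trans_eq <| by
    rw [gauge_smul_of_nonneg ha, gauge_smul_of_nonneg hb]⟩

theorem mem_of_gauge_lt_one (hs : Convex ℝ s) (hs₀ : s ∈ 𝓝 0) {v : E} (hv : gauge s v < 1) :
    v ∈ s :=
  setOfPred_gauge_lt_one_subset_self hs (mem_of_mem_nhds hs₀) (absorbent_nhds_zero hs₀) hv

theorem gauge_le_max_of_inter_subset (hc₁ : Convex ℝ s₁) (h₁ : s₁ ∈ 𝓝 0) (hc₂ : Convex ℝ s₂)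
    (h₂ : s₂ ∈ 𝓝 0) (ho₃ : IsOpen s₃) (h : s₁ ∩ s₂ ⊆ s₃) (v : E) :
    gauge s₃ v ≤ max (gauge s₁ v) (gauge s₂ v) := by
  by_contra! hlt
  have hpos : 0 < gauge s₃ v := (le_max_left _ _).trans_lt hlt |>.trans_le' (gauge_nonneg v)
  -- Rescale `v` onto the boundary of `s₃`: the rescaled point still lies in `s₁ ∩ s₂`.
  have hscale : ∀ s' : Set E, gauge s' ((gauge s₃ v)⁻¹ • v) = gauge s' v / gauge s₃ v := by
    intro s'
    rw [gauge_smul_of_nonneg (inv_nonneg.2 hpos.le), smul_eq_mul, inv_mul_eq_div]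
  have hmem : (gauge s₃ v)⁻¹ • v ∈ s₃ := h
    ⟨mem_of_gauge_lt_one hc₁ h₁ <| by
      rw [hscale, div_lt_one hpos]; exact (le_max_left _ _).trans_lt hlt,
     mem_of_gauge_lt_one hc₂ h₂ <| by
      rw [hscale, div_lt_one hpos]; exact (le_max_right _ _).trans_lt hlt⟩
  have := gauge_lt_one_of_mem_of_isOpen ho₃ hmem
  rw [hscale, div_self hpos.ne'] at this
  exact this.false

theorem one_lt_max_gauge_of_inter_eq_empty (hc₁ : Convex ℝ s₁) (h₁ : s₁ ∈ 𝓝 0)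
    (hc₂ : Convex ℝ s₂) (h₂ : s₂ ∈ 𝓝 0) (ht : IsOpen t) (h : s₁ ∩ s₂ ∩ t = ∅) {v : E}
    (hv : v ∈ t) : 1 < max (gauge s₁ v) (gauge s₂ v) := by
  by_contra! hle
  have hshrink : ∀ {s : Set E}, Convex ℝ s → s ∈ 𝓝 0 → gauge s v ≤ 1 →
      ∀ c ∈ Ico (0 : ℝ) 1, c • v ∈ s := fun hc hs hgv c hc' =>
    mem_of_gauge_lt_one hc hs <| by
      rw [gauge_smul_of_nonneg hc'.1, smul_eq_mul]
      exact mul_lt_one_of_nonneg_of_lt_one_left hc'.1 hc'.2 hgv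
  have hlim : Tendsto (fun c : ℝ => c • v) (𝓝[<] 1) (𝓝 v) := by
    have : Continuous fun c : ℝ => c • v := continuous_id.smul continuous_const
    simpa using (this.tendsto 1).mono_left nhdsWithin_le_nhds
  obtain ⟨c, hct, hc⟩ :=
    ((hlim.eventually_mem (ht.mem_nhds hv)).and (Ico_mem_nhdsLT one_pos)).exists
  have : c • v ∈ s₁ ∩ s₂ ∩ t :=
    ⟨⟨hshrink hc₁ h₁ ((le_max_left _ _).trans hle) c hc,
      hshrink hc₂ h₂ ((le_max_right _ _).trans hle) c hc⟩, hct⟩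
  rwa [h] at this

end Gauge

theorem exists_mem_Ioo_eq_of_lt_of_lt {u v : ℝ → ℝ} {a b : ℝ} (hab : a ≤ b)
    (hu : ContinuousOn u (Icc a b)) (hv : ContinuousOn v (Icc a b)) (ha : u a < v a)
    (hb : v b < u b) : ∃ c ∈ Ioo a b, u c = v c := by
  obtain ⟨c, hc, huv⟩ := intermediate_value_Ioo hab (hu.sub hv) ⟨sub_neg.2 ha, sub_pos.2 hb⟩
  exact ⟨c, hc, sub_eq_zero.1 huv⟩

theorem false_of_max_gauge_ties {f g h : ℝ → ℝ} (hfc : ConvexOn ℝ (Icc 0 1) f)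
    (hhc : ConvexOn ℝ (Icc 0 1) h) (hf : ContinuousOn f (Icc 0 1))
    (hg : ContinuousOn g (Icc 0 1)) (hh : ContinuousOn h (Icc 0 1))
    (hfg : ∀ a ∈ Icc (0 : ℝ) 1, 1 < max (f a) (g a))
    (hgh : ∀ a ∈ Icc (0 : ℝ) 1, 1 < max (g a) (h a))
    (hf_le : ∀ a ∈ Icc (0 : ℝ) 1, f a ≤ max (g a) (h a))
    (hh_le : ∀ a ∈ Icc (0 : ℝ) 1, h a ≤ max (f a) (g a))
    {t : ℝ} (ht : t ∈ Icc (0 : ℝ) 1) (hf0 : f 0 < 1) (hgt : g t < 1) (hh1 : h 1 < 1) :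
    False := by
  have h0 : (0 : ℝ) ∈ Icc (0 : ℝ) 1 := left_mem_Icc.2 zero_le_one
  have h1 : (1 : ℝ) ∈ Icc (0 : ℝ) 1 := right_mem_Icc.2 zero_le_one
  have hsub₀ : Icc 0 t ⊆ Icc (0 : ℝ) 1 := Icc_subset_Icc le_rfl ht.2
  have hsub₁ : Icc t 1 ⊆ Icc (0 : ℝ) 1 := Icc_subset_Icc ht.1 le_rfl
  obtain ⟨l, hl, hfgl⟩ := exists_mem_Ioo_eq_of_lt_of_lt ht.1 (hf.mono hsub₀) (hg.mono hsub₀)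
    (hf0.trans ((lt_max_iff.1 (hfg 0 h0)).resolve_left (lt_asymm hf0)))
    (hgt.trans ((lt_max_iff.1 (hfg t ht)).resolve_right (lt_asymm hgt)))
  obtain ⟨r, hr, hghr⟩ := exists_mem_Ioo_eq_of_lt_of_lt ht.2 (hg.mono hsub₁) (hh.mono hsub₁)
    (hgt.trans ((lt_max_iff.1 (hgh t ht)).resolve_left (lt_asymm hgt)))
    (hh1.trans ((lt_max_iff.1 (hgh 1 h1)).resolve_right (lt_asymm hh1)))
  have hlI : l ∈ Icc (0 : ℝ) 1 := ⟨hl.1.le, hl.2.le.trans ht.2⟩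
  have hrI : r ∈ Icc (0 : ℝ) 1 := ⟨ht.1.trans hr.1.le, hr.2.le⟩
  have hfl : 1 < f l := by simpa [hfgl] using hfg l hlI
  have hhr : 1 < h r := by simpa [hghr] using hgh r hrI
  have hhl : h l ≤ f l := by simpa [hfgl] using hh_le l hlI
  have hfr : f r ≤ h r := by simpa [hghr] using hf_le r hrI
  have e₁ := hfc.secant_mono_aux1 h0 hrI hl.1 (hl.2.trans hr.1)
  have e₃ := hhc.secant_mono_aux1 hlI h1 (hl.2.trans hr.1) hr.2
  have hlr : 0 < r - l := sub_pos.2 (hl.2.trans hr.1)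
  -- With `A = f l - 1 > 0` and `B = h r - 1 > 0`, convexity of `f` on `[0, r]` and of `h` on
  -- `[l, 1]` gives `r A < l B` and `(1 - l) B < (1 - r) A`, which together force `r < l`.
  have k₁ : r * (f l - 1) < l * (h r - 1) := by nlinarith [hl.1]
  have k₃ : (1 - l) * (h r - 1) < (1 - r) * (f l - 1) := by nlinarith [hr.2]
  nlinarith [mul_lt_mul_of_pos_left k₁ (by linarith [hr.2] : (0 : ℝ) < 1 - l),
    mul_lt_mul_of_pos_left k₃ hl.1, mul_pos hlr (sub_pos.2 hfl)]

section Wheel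

variable {E : Type*} [NormedAddCommGroup E] [NormedSpace ℝ E] {U₁ U₂ U₃ T : Set E}

theorem false_of_wheel_of_zero_mem (hc₁ : Convex ℝ U₁) (hc₂ : Convex ℝ U₂)
    (hc₃ : Convex ℝ U₃) (ho₁ : IsOpen U₁) (ho₂ : IsOpen U₂) (ho₃ : IsOpen U₃) (hT : IsOpen T)
    (h0 : (0 : E) ∈ U₁ ∩ U₂ ∩ U₃) (h₁₂ : U₁ ∩ U₂ ⊆ U₃) (h₂₃ : U₂ ∩ U₃ ⊆ U₁)
    (hempty : U₁ ∩ U₂ ∩ U₃ ∩ T = ∅) {x y z : E} (hseg : segment ℝ x y ⊆ T) (hx : x ∈ U₁)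
    (hy : y ∈ U₃) (hz : z ∈ segment ℝ x y) (hz₂ : z ∈ U₂) : False := by
  have hn₁ := ho₁.mem_nhds h0.1.1
  have hn₂ := ho₂.mem_nhds h0.1.2
  have hn₃ := ho₃.mem_nhds h0.2
  set γ : ℝ →ᵃ[ℝ] E := AffineMap.lineMap x y
  have hγT : ∀ a ∈ Icc (0 : ℝ) 1, γ a ∈ T := fun a ha =>
    hseg (segment_eq_image_lineMap ℝ x y ▸ mem_image_of_mem γ ha)
  have hconv : ∀ {s : Set E}, Convex ℝ s → s ∈ 𝓝 0 → ConvexOn ℝ (Icc 0 1) (gauge s ∘ γ) :=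
    fun hc hs => ((convexOn_gauge hc (absorbent_nhds_zero hs)).comp_affineMap γ).subset
      (subset_univ _) (convex_Icc 0 1)
  have hcont : ∀ {s : Set E}, Convex ℝ s → s ∈ 𝓝 0 → ContinuousOn (gauge s ∘ γ) (Icc 0 1) :=
    fun hc hs => ((continuous_gauge hc hs).comp AffineMap.lineMap_continuous).continuousOn
  have h₁₂T : U₁ ∩ U₂ ∩ T = ∅ := subset_empty_iff.1 fun v hv =>
    hempty ▸ ⟨⟨hv.1, h₁₂ hv.1⟩, hv.2⟩
  have h₂₃T : U₂ ∩ U₃ ∩ T = ∅ := subset_empty_iff.1 fun v hv =>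
    hempty ▸ ⟨⟨⟨h₂₃ hv.1, hv.1.1⟩, hv.1.2⟩, hv.2⟩
  rw [segment_eq_image_lineMap] at hz
  obtain ⟨t, ht, rfl⟩ := hz
  refine false_of_max_gauge_ties (hconv hc₁ hn₁) (hconv hc₃ hn₃) (hcont hc₁ hn₁)
    (hcont hc₂ hn₂) (hcont hc₃ hn₃)
    (fun a ha => one_lt_max_gauge_of_inter_eq_empty hc₁ hn₁ hc₂ hn₂ hT h₁₂T (hγT a ha))
    (fun a ha => one_lt_max_gauge_of_inter_eq_empty hc₂ hn₂ hc₃ hn₃ hT h₂₃T (hγT a ha))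
    (fun a _ => gauge_le_max_of_inter_subset hc₂ hn₂ hc₃ hn₃ ho₁ h₂₃ _)
    (fun a _ => gauge_le_max_of_inter_subset hc₁ hn₁ hc₂ hn₂ ho₃ h₁₂ _) ht ?_
    (gauge_lt_one_of_mem_of_isOpen ho₂ hz₂) ?_
  · simpa [γ] using gauge_lt_one_of_mem_of_isOpen ho₁ hx
  · simpa [γ] using gauge_lt_one_of_mem_of_isOpen ho₃ hy

theorem false_of_wheel (hc₁ : Convex ℝ U₁) (hc₂ : Convex ℝ U₂) (hc₃ : Convex ℝ U₃)
    (ho₁ : IsOpen U₁) (ho₂ : IsOpen U₂) (ho₃ : IsOpen U₃) (hT : IsOpen T) {p : E}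
    (hp : p ∈ U₁ ∩ U₂ ∩ U₃) (h₁₂ : U₁ ∩ U₂ ⊆ U₃) (h₂₃ : U₂ ∩ U₃ ⊆ U₁)
    (hempty : U₁ ∩ U₂ ∩ U₃ ∩ T = ∅) {x y z : E} (hseg : segment ℝ x y ⊆ T) (hx : x ∈ U₁)
    (hy : y ∈ U₃) (hz : z ∈ segment ℝ x y) (hz₂ : z ∈ U₂) : False := by
  have hcont := continuous_const_add p
  refine false_of_wheel_of_zero_mem (U₁ := (p + ·) ⁻¹' U₁) (U₂ := (p + ·) ⁻¹' U₂)
    (U₃ := (p + ·) ⁻¹' U₃) (T := (p + ·) ⁻¹' T) (x := x - p) (y := y - p) (z := z - p)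
    (hc₁.translate_preimage_right p) (hc₂.translate_preimage_right p)
    (hc₃.translate_preimage_right p) (ho₁.preimage hcont) (ho₂.preimage hcont)
    (ho₃.preimage hcont) (hT.preimage hcont) (by simpa using hp) (fun v hv => h₁₂ hv)
    (fun v hv => h₂₃ hv) (eq_empty_of_forall_notMem fun v hv =>
      hempty.subset (show p + v ∈ U₁ ∩ U₂ ∩ U₃ ∩ T from hv))
    (fun v hv => hseg ?_) (by simpa using hx) (by simpa using hy) ?_ (by simpa using hz₂)
  · simpa using (mem_segment_translate ℝ p).2 hv
  · simpa using (mem_segment_translate ℝ p (x := z - p)).1 (by simpa using hz)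

end Wheel

namespace NeuralCode

variable {ι : Type*} {d : ℕ} {C : Set (Finset ι)} {U : ι → Set (EuclideanSpace ℝ (Fin d))}
  {σ σ' σ'' σ1 σ2 σ3 τ : Finset ι} {q : EuclideanSpace ℝ (Fin d)}

theorem mem_USet : q ∈ USet U σ ↔ ∀ i ∈ σ, q ∈ U i := by
  simp only [USet, mem_iInter]

theorem USet_union [DecidableEq ι] : USet U (σ ∪ σ') = USet U σ ∩ USet U σ' :=
  Finset.set_biInter_inter _ _ _

theorem isOpen_USet (hU : ∀ i, IsOpen (U i)) (σ : Finset ι) : IsOpen (USet U σ) :=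
  isOpen_biInter_finset fun i _ => hU i

theorem convex_USet (hU : ∀ i, Convex ℝ (U i)) (σ : Finset ι) : Convex ℝ (USet U σ) :=
  convex_iInter₂ fun i _ => hU i

noncomputable def codeAt [Fintype ι] (U : ι → Set (EuclideanSpace ℝ (Fin d)))
    (q : EuclideanSpace ℝ (Fin d)) : Finset ι := by
  classical exact Finset.univ.filter (q ∈ U ·)

theorem mem_codeAt [Fintype ι] {i : ι} : i ∈ codeAt U q ↔ q ∈ U i := by
  classical simp [codeAt]

theorem subset_codeAt [Fintype ι] : σ ⊆ codeAt U q ↔ q ∈ USet U σ := by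
  simp only [Finset.subset_iff, mem_codeAt, mem_USet]

namespace IsRealization

variable [Fintype ι]

theorem codeAt_mem (hU : IsRealization C U) (q : EuclideanSpace ℝ (Fin d)) :
    codeAt U q ∈ C := by
  refine (hU.2 _).2 ⟨q, subset_codeAt.1 subset_rfl, ?_⟩
  simp only [mem_iUnion, not_exists]
  exact fun j hj hq => hj (mem_codeAt.2 hq)

theorem codeAt_mem_trunk (hU : IsRealization C U) (hq : q ∈ USet U σ) :
    codeAt U q ∈ trunk C σ :=
  ⟨hU.codeAt_mem q, subset_codeAt.2 hq⟩

theorem USet_subset_of_trunk_subset (hU : IsRealization C U) (h : trunk C σ ⊆ trunk C σ') :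
    USet U σ ⊆ USet U σ' :=
  fun _ hq => subset_codeAt.1 (h (hU.codeAt_mem_trunk hq)).2

theorem USet_eq_of_trunk_eq (hU : IsRealization C U) (h : trunk C σ = trunk C σ') :
    USet U σ = USet U σ' :=
  (hU.USet_subset_of_trunk_subset h.le).antisymm (hU.USet_subset_of_trunk_subset h.ge)

theorem USet_subset_union_of_trunk_subset (hU : IsRealization C U)
    (h : trunk C σ ⊆ trunk C σ' ∪ trunk C σ'') : USet U σ ⊆ USet U σ' ∪ USet U σ'' :=
  fun _ hq => (h (hU.codeAt_mem_trunk hq)).imp (subset_codeAt.1 ·.2) (subset_codeAt.1 ·.2)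

theorem USet_nonempty_iff (hU : IsRealization C U) :
    (USet U σ).Nonempty ↔ σ ∈ neuralComplex C := by
  constructor
  · rintro ⟨q, hq⟩
    exact ⟨codeAt U q, hU.codeAt_mem q, subset_codeAt.2 hq⟩
  · rintro ⟨c, hc, hσc⟩
    obtain ⟨q, hq, -⟩ := (hU.2 c).1 hc
    exact ⟨q, mem_USet.2 fun i hi => mem_USet.1 hq i (hσc hi)⟩

end IsRealization

theorem not_isWheelOfRealization_of_convex (ho : ∀ i, IsOpen (U i)) (hc : ∀ i, Convex ℝ (U i)) :
    ¬IsWheelOfRealization U σ1 σ2 σ3 τ := by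
  rintro ⟨⟨h₁₂, -, h₂₃, p, hp⟩, hempty, hiii⟩
  have hc' := convex_USet hc
  have ho' := isOpen_USet ho
  obtain ⟨x, hx, y, hy, z, hz, hz₂, -⟩ :=
    hiii ⟨hc' τ, (hc' σ1).inter (hc' τ), (hc' σ2).inter (hc' τ), (hc' σ3).inter (hc' τ)⟩
  exact false_of_wheel (hc' σ1) (hc' σ2) (hc' σ3) (ho' σ1) (ho' σ2) (ho' σ3) (ho' τ) hp
    (fun _ hq => (h₁₂ ▸ hq).2) (fun _ hq => (h₂₃ ▸ hq).1.1) hempty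
    ((hc' τ).segment_subset hx.2 hy.2) hx.1 hy.1 hz hz₂

variable [Fintype ι] [DecidableEq ι]

theorem CondPi.wheelWi (h : CondPi C σ1 σ2 σ3) (hU : IsRealization C U) :
    WheelWi U σ1 σ2 σ3 := by
  obtain ⟨hface, h₁₂, h₁₃, h₂₃⟩ := h
  simp only [WheelWi, ← USet_union]
  exact ⟨hU.USet_eq_of_trunk_eq h₁₂, hU.USet_eq_of_trunk_eq h₁₃, hU.USet_eq_of_trunk_eq h₂₃,
    hU.USet_nonempty_iff.2 hface⟩

theorem CondPii.wheelWii (h : CondPii C σ1 σ2 σ3 τ) (hU : IsRealization C U) :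
    WheelWii U σ1 σ2 σ3 τ := by
  rw [WheelWii, ← USet_union, ← USet_union, ← USet_union, ← not_nonempty_iff_eq_empty,
    hU.USet_nonempty_iff]
  exact h

theorem IsSprocket.wheelWiii (hs : IsSprocket C σ1 σ2 σ3 τ) (hU : IsRealization C U) :
    WheelWiii U σ1 σ2 σ3 τ := by
  obtain ⟨-, -, -, -, -, -, ⟨h1τ, -, h3τ⟩, ρ1, -, ρ3, -, hρ1, hρ3, hτ, hρ⟩ := hs
  rintro ⟨hτc, -, -, -⟩
  obtain ⟨x, hx⟩ := hU.USet_nonempty_iff.2 h1τ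
  obtain ⟨y, hy⟩ := hU.USet_nonempty_iff.2 h3τ
  have hxρ : x ∈ USet U ρ1 := hU.USet_subset_of_trunk_subset hρ1 hx
  have hyρ : y ∈ USet U ρ3 := hU.USet_subset_of_trunk_subset hρ3 hy
  rw [USet_union] at hx hy
  have hseg : segment ℝ x y ⊆ USet U τ := hτc.segment_subset hx.2 hy.2
  obtain ⟨z, hz, hz₁, hz₃⟩ := (convex_segment x y).isPreconnected _ _
    (isOpen_USet hU.1 ρ1) (isOpen_USet hU.1 ρ3)
    (hseg.trans (hU.USet_subset_union_of_trunk_subset hτ))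
    ⟨x, left_mem_segment ℝ x y, hxρ⟩ ⟨y, right_mem_segment ℝ x y, hyρ⟩
  have hz₂ : z ∈ USet U σ2 := hU.USet_subset_of_trunk_subset hρ <| by
    rw [USet_union, USet_union]
    exact ⟨⟨hz₁, hz₃⟩, hseg hz⟩
  exact ⟨x, hx, y, hy, z, hz, hz₂, hseg hz⟩

theorem IsSprocket.isWheelOfRealization (hs : IsSprocket C σ1 σ2 σ3 τ)
    (hU : IsRealization C U) : IsWheelOfRealization U σ1 σ2 σ3 τ :=
  ⟨hs.2.2.2.2.1.wheelWi hU, hs.2.2.2.2.2.1.wheelWii hU, hs.wheelWiii hU⟩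

end NeuralCode

open NeuralCode

/-- every sprocket is a wheel of every realization, and codes with
sprockets are non-convex. -/
theorem sprocket_is_wheel_and_nonconvex {n : ℕ} (C : Set (Finset (Fin n)))
    (σ1 σ2 σ3 τ : Finset (Fin n)) (hs : IsSprocket C σ1 σ2 σ3 τ) :
    (∀ (d : ℕ) (U : Fin n → Set (EuclideanSpace ℝ (Fin d))), IsRealization C U →
        Convex ℝ (USet U τ) → Convex ℝ (USet U σ1 ∩ USet U τ) →
        Convex ℝ (USet U σ2 ∩ USet U τ) → Convex ℝ (USet U σ3 ∩ USet U τ) →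
        ∃ x ∈ USet U σ1 ∩ USet U τ, ∃ y ∈ USet U σ3 ∩ USet U τ,
          (segment ℝ x y ∩ (USet U σ2 ∩ USet U τ)).Nonempty) ∧
    ¬IsConvexCode C := by
  refine ⟨fun d U hU hτ h₁ h₂ h₃ => hs.wheelWiii hU ⟨hτ, h₁, h₂, h₃⟩, ?_⟩
  rintro ⟨d, U, hU, hconv⟩
  exact not_isWheelOfRealization_of_convex hU.1 hconv (hs.isWheelOfRealization hU)
end

section
/- If (σ1, σ2, σ3, τ) is a wire wheel of a code C on n neurons, then τ ∉ C and τ is a max-intersection face of Δ(C), i.e., τ equals the intersection of two or more distinct facets of Δ(C). -/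
open NeuralCode

/-
Extend `τ ∪ {v₁}` and `τ ∪ {v₃}` to facets `F₁` and `F₃`. A vertex `u ∉ τ` of the link in
`F₁ ∩ F₃` would give a walk `v₁ — u — v₃` inside the cliques spanned by `F₁` and `F₃`, hence a
path through `v₂`, so `v₂` lies in `F₁` or `F₃`. Either way a codeword contains `σ₁ ∪ σ₂ ∪ τ` or
`σ₂ ∪ σ₃ ∪ τ`, and P(i) upgrades it to `σ₁ ∪ σ₂ ∪ σ₃ ∪ τ`, contradicting P(ii). So `F₁ ∩ F₃ = τ`.
-/

theorem SimpleGraph.IsClique.exists_walk_support_subset {V : Type*} {G : SimpleGraph V}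
    {s : Set V} (hs : G.IsClique s) {a b : V} (ha : a ∈ s) (hb : b ∈ s) :
    ∃ p : G.Walk a b, ∀ x ∈ p.support, x ∈ s := by
  by_cases hab : a = b
  · subst hab
    exact ⟨.nil, by simpa using ha⟩
  · refine ⟨(hs ha hb hab).toWalk, ?_⟩
    simp only [SimpleGraph.Adj.support_toWalk, List.mem_cons, List.not_mem_nil, or_false]
    rintro x (rfl | rfl) <;> assumption

theorem SimpleGraph.Walk.mem_support_of_forall_isPath {V : Type*} {G : SimpleGraph V}
    {a b c : V} (hsep : ∀ p : G.Walk a c, p.IsPath → b ∈ p.support) (q : G.Walk a c) :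
    b ∈ q.support := by
  classical
  exact q.support_bypass_subset_support (hsep _ q.bypass_isPath)

theorem Finset.subset_of_sdiff_eq_singleton {ι : Type*} [DecidableEq ι] {σ τ F : Finset ι}
    {v : ι} (h : σ \ τ = {v}) (hv : v ∈ F) (hτ : τ ⊆ F) : σ ⊆ F :=
  (sdiff_le_iff.mp (h ▸ Finset.singleton_subset_iff.mpr hv)).trans (Finset.union_subset hτ le_rfl)

namespace NeuralCode

variable {ι : Type*} {C : Set (Finset ι)}

theorem exists_isFacet_superset [Finite ι] {σ : Finset ι} (hσ : σ ∈ neuralComplex C) :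
    ∃ F, IsFacet C F ∧ σ ⊆ F := by
  obtain ⟨c, hc, hσc⟩ := hσ
  obtain ⟨F, hmax⟩ :=
    (Set.toFinite {c' | c' ∈ C ∧ c ⊆ c'}).exists_maximal ⟨c, hc, subset_rfl⟩
  obtain ⟨hFC, hcF⟩ := hmax.prop
  exact ⟨F, ⟨hFC, fun c' hc' hFc' => (hmax.eq_of_le ⟨hc', hcF.trans hFc'⟩ hFc').symm⟩,
    hσc.trans hcF⟩

variable [DecidableEq ι]

theorem union_notMem_neuralComplex_of_trunk_eq {ρ σ τ : Finset ι} (htr : trunk C ρ = trunk C σ)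
    (h : σ ∪ τ ∉ neuralComplex C) : ρ ∪ τ ∉ neuralComplex C := by
  rintro ⟨c, hc, hρτ⟩
  have hσ : c ∈ trunk C σ := htr ▸ ⟨hc, Finset.union_subset_left hρτ⟩
  exact h ⟨c, hc, Finset.union_subset hσ.2 (Finset.union_subset_right hρτ)⟩

theorem isMaxIntersectionFace_of_inter_eq [Fintype ι] {τ F₁ F₂ : Finset ι}
    (hτ : τ ∈ neuralComplex C) (hF₁ : IsFacet C F₁) (hF₂ : IsFacet C F₂) (hne : F₁ ≠ F₂)
    (hinter : F₁ ∩ F₂ = τ) : IsMaxIntersectionFace C τ := by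
  refine ⟨hτ, {F₁, F₂}, (Finset.card_pair hne).ge, ?_, ?_⟩
  · simp only [Finset.mem_insert, Finset.mem_singleton]
    rintro F (rfl | rfl) <;> assumption
  · simpa using hinter.symm

theorem isClique_linkGraph {τ F : Finset ι} (hF : F ∈ C) (hτF : τ ⊆ F) :
    (linkGraph C τ).IsClique {v | (v : ι) ∈ F} := fun _ ha _ hb hab =>
  ⟨hab, F, hF, Finset.union_subset hτF
    (Finset.insert_subset ha (Finset.singleton_subset_iff.mpr hb))⟩

theorem mem_or_mem_of_forall_isPath_linkGraph {τ F₁ F₃ : Finset ι} {u : ι}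
    {v₁ v₂ v₃ : {i : ι // i ∉ τ ∧ insert i τ ∈ neuralComplex C}}
    (hsep : ∀ p : (linkGraph C τ).Walk v₁ v₃, p.IsPath → v₂ ∈ p.support)
    (hF₁ : F₁ ∈ C) (hF₃ : F₃ ∈ C) (hτF₁ : τ ⊆ F₁) (hτF₃ : τ ⊆ F₃)
    (hv₁ : (v₁ : ι) ∈ F₁) (hv₃ : (v₃ : ι) ∈ F₃) (hu : u ∈ F₁ ∩ F₃) (huτ : u ∉ τ) :
    (v₂ : ι) ∈ F₁ ∨ (v₂ : ι) ∈ F₃ := by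
  rw [Finset.mem_inter] at hu
  let w : {i : ι // i ∉ τ ∧ insert i τ ∈ neuralComplex C} :=
    ⟨u, huτ, F₁, hF₁, Finset.insert_subset hu.1 hτF₁⟩
  obtain ⟨p, hp⟩ := (isClique_linkGraph hF₁ hτF₁).exists_walk_support_subset
    (b := w) hv₁ hu.1
  obtain ⟨q, hq⟩ := (isClique_linkGraph hF₃ hτF₃).exists_walk_support_subset
    (a := w) hu.2 hv₃
  rcases (SimpleGraph.Walk.mem_support_append_iff p q).mp
    (SimpleGraph.Walk.mem_support_of_forall_isPath hsep _) with h | h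
  · exact .inl (hp _ h)
  · exact .inr (hq _ h)

end NeuralCode

/-- the rim of a wire wheel is a non-codeword and a max-intersection face. -/
theorem wire_wheel_rim {n : ℕ} (C : Set (Finset (Fin n)))
    (σ1 σ2 σ3 τ : Finset (Fin n)) (h : IsWireWheel C σ1 σ2 σ3 τ) :
    τ ∉ C ∧ IsMaxIntersectionFace C τ := by
  obtain ⟨-, -, -, hτ, hPi, hPii, hτC, -, -, v1, v2, v3, hs1, hs2, hs3, hsep⟩ := h
  obtain ⟨F1, hF1, hF1sub⟩ := exists_isFacet_superset v1.2.2
  obtain ⟨F3, hF3, hF3sub⟩ := exists_isFacet_superset v3.2.2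
  obtain ⟨hv1, hτF1⟩ := Finset.insert_subset_iff.mp hF1sub
  obtain ⟨hv3, hτF3⟩ := Finset.insert_subset_iff.mp hF3sub
  have hinter : F1 ∩ F3 = τ := by
    refine subset_antisymm (fun u hu => ?_) (Finset.subset_inter hτF1 hτF3)
    by_contra huτ
    rcases mem_or_mem_of_forall_isPath_linkGraph hsep hF1.1 hF3.1 hτF1 hτF3 hv1 hv3 hu huτ
      with hv2 | hv2
    · refine union_notMem_neuralComplex_of_trunk_eq hPi.2.1 hPii ⟨F1, hF1.1, ?_⟩
      exact Finset.union_subset (Finset.union_subset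
        (Finset.subset_of_sdiff_eq_singleton hs1 hv1 hτF1)
        (Finset.subset_of_sdiff_eq_singleton hs2 hv2 hτF1)) hτF1
    · refine union_notMem_neuralComplex_of_trunk_eq hPi.2.2.2 hPii ⟨F3, hF3.1, ?_⟩
      exact Finset.union_subset (Finset.union_subset
        (Finset.subset_of_sdiff_eq_singleton hs2 hv2 hτF3)
        (Finset.subset_of_sdiff_eq_singleton hs3 hv3 hτF3)) hτF3
  have hne : F1 ≠ F3 := fun he => v1.2.1 (hinter ▸ Finset.mem_inter.mpr ⟨hv1, he ▸ hv1⟩)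
  exact ⟨hτC, isMaxIntersectionFace_of_inter_eq hτ hF1 hF3 hne hinter⟩
end
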